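/- Let Γ be a countable discrete group with a topologically-free extreme boundary action Γ ↷ X, and let (zₙ)ₙ be an axial sequence in Γ for this action, with associated distinct points z₊, z₋ ∈ X. Then for every finite set F₀ ⊆ Γ and every integer N ≥ 1 there exists an index n such that: (a) zₙᵏ ≠ 1 in Γ for all integers k with 1 ≤ |k| ≤ N; and (b) every product of at most N factors that strictly alternates between elements of F₀ \ {1} and powers zₙᵏ with 1 ≤ |k| ≤ N (the product may start and end with either type of factor) is not equal to the identity element of Γ. (Equivalently, in terms of the canonical trace τ(g) = δ_{g,1} on the reduced group C*-algebra, the unitary u = zₙ satisfies the approximate-selflessness conditions for F₀ and N with exact value zero.) -/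

import Mathlib

open Filter Topology

/-- A factor of an alternating group word: either a group element from the given set,
or a power of the distinguished element `u`. -/
def groupAltFactor {Γ : Type*} [Group Γ] (u : Γ) : Γ ⊕ ℤ → Γ
  | Sum.inl g => g
  | Sum.inr k => u ^ k

/-- `w` is an `N`-alternating group word built from `F₀ \ {1}` and powers of `u`: a product of
at most `N` factors that strictly alternates between non-identity elements of `F₀` and powers
`uᵏ` with `1 ≤ |k| ≤ N`; the word may begin and end with either type of factor. -/
def IsAltGroupWord {Γ : Type*} [Group Γ] (F₀ : Set Γ) (N : ℕ) (u : Γ) (w : Γ) : Prop :=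
  ∃ l : List (Γ ⊕ ℤ),
    l ≠ [] ∧
    l.Chain' (fun x y => x.isLeft ≠ y.isLeft) ∧
    l.length ≤ N ∧
    (∀ f ∈ l, (∀ g : Γ, f = Sum.inl g → g ∈ F₀ ∧ g ≠ 1) ∧
              (∀ k : ℤ, f = Sum.inr k → 1 ≤ |k| ∧ |k| ≤ (N : ℤ))) ∧
    w = (l.map (groupAltFactor u)).prod

/-- Precondition on the starting point, depending on the rightmost factor. -/
def altPre {Γ X : Type*} (Up Um : Set X) : Γ ⊕ ℤ → X → Prop
  | Sum.inl _, p => p ∈ Up ∪ Um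
  | Sum.inr k, p => (0 < k → p ∉ Um) ∧ (k < 0 → p ∉ Up)

/-- Postcondition on the resulting point, depending on the leftmost factor. -/
def altGood {Γ X : Type*} (Up Um : Set X) : Γ ⊕ ℤ → X → Prop
  | Sum.inl _, p => p ∉ Up ∪ Um
  | Sum.inr k, p => (0 < k → p ∈ Up) ∧ (k < 0 → p ∈ Um)

/-- Last element of `a :: l`. -/
def myLast {α : Type*} : α → List α → α
  | a, [] => a
  | _, b :: l => myLast b l

lemma myLast_mem {α : Type*} : ∀ (l : List α) (a : α), myLast a l ∈ a :: l
  | [], a => by simp [myLast]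
  | b :: l, a => by
    have h := myLast_mem l b
    simp only [myLast]
    rcases List.mem_cons.mp h with h' | h'
    · rw [h']; exact List.mem_cons_of_mem _ (List.mem_cons_self)
    · exact List.mem_cons_of_mem _ (List.mem_cons_of_mem _ h')

/-- Core ping-pong estimate for alternating words. -/
lemma pingpong_core {Γ : Type*} [Group Γ] {X : Type*} [MulAction Γ X]
    (Up Um : Set X) (s : Γ) (T : Set Γ)
    (hpos : ∀ k : ℤ, 0 < k → ∀ x, x ∉ Um → s ^ k • x ∈ Up)
    (hneg : ∀ k : ℤ, k < 0 → ∀ x, x ∉ Up → s ^ k • x ∈ Um)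
    (hT : ∀ g ∈ T, ∀ x ∈ Up ∪ Um, g • x ∉ Up ∪ Um) :
    ∀ (rest : List (Γ ⊕ ℤ)) (f : Γ ⊕ ℤ),
      List.Chain' (fun x y => x.isLeft ≠ y.isLeft) (f :: rest) →
      (∀ f' ∈ f :: rest, (∀ g : Γ, f' = Sum.inl g → g ∈ T) ∧
          (∀ k : ℤ, f' = Sum.inr k → k ≠ 0)) →
      ∀ p : X, altPre Up Um (myLast f rest) p →
        altGood Up Um f (((f :: rest).map (groupAltFactor s)).prod • p) := by
  have step : ∀ (f : Γ ⊕ ℤ),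
      ((∀ g : Γ, f = Sum.inl g → g ∈ T) ∧ (∀ k : ℤ, f = Sum.inr k → k ≠ 0)) →
      ∀ q : X, altPre Up Um f q → altGood Up Um f (groupAltFactor s f • q) := by
    rintro (g | k) hc q hpre
    · exact hT g (hc.1 g rfl) q hpre
    · exact ⟨fun h => hpos k h q (hpre.1 h), fun h => hneg k h q (hpre.2 h)⟩
  intro rest
  induction rest with
  | nil =>
    intro f hchain hmem p hpre
    have he : (([f]).map (groupAltFactor s)).prod = groupAltFactor s f := by simp
    rw [he]
    exact step f (hmem f (by simp)) p hpre
  | cons f' rest' ih =>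
    intro f hchain hmem p hpre
    rw [show List.Chain' _ _ = List.IsChain _ _ from rfl, List.isChain_cons_cons] at hchain
    obtain ⟨halt, hch'⟩ := hchain
    have hmem' : ∀ f'' ∈ f' :: rest', (∀ g : Γ, f'' = Sum.inl g → g ∈ T) ∧
        (∀ k : ℤ, f'' = Sum.inr k → k ≠ 0) := fun f'' hf'' =>
      hmem f'' (List.mem_cons_of_mem _ hf'')
    have hgood' := ih f' hch' hmem' p hpre
    set q := ((f' :: rest').map (groupAltFactor s)).prod • p with hq
    have hpre2 : altPre Up Um f q := by
      rcases hf : f with g | k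
      · rcases hf' : f' with g' | k'
        · rw [hf, hf'] at halt; simp at halt
        · rw [hf'] at hgood'
          have hk' : k' ≠ 0 := (hmem' _ (List.mem_cons_self)).2 k' hf'
          rcases lt_trichotomy 0 k' with h | h | h
          · exact Or.inl (hgood'.1 h)
          · exact absurd h.symm hk'
          · exact Or.inr (hgood'.2 h)
      · rcases hf' : f' with g' | k'
        · rw [hf'] at hgood'
          exact ⟨fun _ hm => hgood' (Or.inr hm), fun _ hm => hgood' (Or.inl hm)⟩
        · rw [hf, hf'] at halt; simp at halt
    have hprod : ((f :: f' :: rest').map (groupAltFactor s)).prod • p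
        = groupAltFactor s f • q := by
      rw [List.map_cons, List.prod_cons, mul_smul]
    rw [hprod]
    exact step f (hmem f (List.mem_cons_self)) q hpre2

/-- Construction of the separating neighbourhoods. -/
lemma pingpong_nbhds {Γ : Type*} [Group Γ]
    {X : Type*} [TopologicalSpace X] [T2Space X]
    [MulAction Γ X] [ContinuousConstSMul Γ X]
    (zp zm x₀ : X) (hne : zp ≠ zm) (hx0p : x₀ ≠ zp) (hx0m : x₀ ≠ zm)
    (hfreepoles : ∀ g : Γ, g ≠ 1 →
      g • zp ≠ zp ∧ g • zp ≠ zm ∧ g • zm ≠ zp ∧ g • zm ≠ zm) :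
    ∀ S : Finset Γ, (∀ g ∈ S, g ≠ 1) →
    ∃ Up Um : Set X, IsOpen Up ∧ IsOpen Um ∧ zp ∈ Up ∧ zm ∈ Um ∧
      (∀ x ∈ Up, x ∉ Um) ∧ x₀ ∉ Up ∧ x₀ ∉ Um ∧
      ∀ g ∈ S, ∀ x ∈ Up ∪ Um, g • x ∉ Up ∪ Um := by
  classical
  intro S
  induction S using Finset.induction_on with
  | empty =>
    intro _
    obtain ⟨u, v, hu, hv, hzpu, hzmv, hd⟩ := t2_separation hne
    refine ⟨u ∩ {x₀}ᶜ, v ∩ {x₀}ᶜ, hu.inter isOpen_compl_singleton,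
      hv.inter isOpen_compl_singleton, ⟨hzpu, by simpa using hx0p.symm⟩,
      ⟨hzmv, by simpa using hx0m.symm⟩, ?_, ?_, ?_, ?_⟩
    · intro x hx hx'
      exact Set.disjoint_left.mp hd hx.1 hx'.1
    · intro hx; exact hx.2 rfl
    · intro hx; exact hx.2 rfl
    · intro g hg; simp at hg
  | @insert g S hgS ih =>
    intro hall
    have hg1 : g ≠ 1 := hall g (Finset.mem_insert_self g S)
    obtain ⟨Up, Um, hUpo, hUmo, hzpU, hzmU, hdisj, hx0U, hx0M, hS⟩ :=
      ih (fun g' hg' => hall g' (Finset.mem_insert_of_mem hg'))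
    obtain ⟨h1, h2, h3, h4⟩ := hfreepoles g hg1
    obtain ⟨A1, B1, hA1, hB1, hgA1, hzB1, hd1⟩ := t2_separation h1
    obtain ⟨A2, B2, hA2, hB2, hgA2, hzB2, hd2⟩ := t2_separation h2
    obtain ⟨A3, B3, hA3, hB3, hgA3, hzB3, hd3⟩ := t2_separation h3
    obtain ⟨A4, B4, hA4, hB4, hgA4, hzB4, hd4⟩ := t2_separation h4
    have hc : Continuous fun x : X => g • x := continuous_const_smul g
    refine ⟨Up ∩ B1 ∩ B3 ∩ ((fun x : X => g • x) ⁻¹' A1) ∩ ((fun x : X => g • x) ⁻¹' A2),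
      Um ∩ B2 ∩ B4 ∩ ((fun x : X => g • x) ⁻¹' A3) ∩ ((fun x : X => g • x) ⁻¹' A4),
      ?_, ?_, ?_, ?_, ?_, ?_, ?_, ?_⟩
    · exact ((((hUpo.inter hB1).inter hB3).inter (hA1.preimage hc)).inter (hA2.preimage hc))
    · exact ((((hUmo.inter hB2).inter hB4).inter (hA3.preimage hc)).inter (hA4.preimage hc))
    · exact ⟨⟨⟨⟨hzpU, hzB1⟩, hzB3⟩, hgA1⟩, hgA2⟩
    · exact ⟨⟨⟨⟨hzmU, hzB2⟩, hzB4⟩, hgA3⟩, hgA4⟩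
    · intro x hx hx'; exact hdisj x hx.1.1.1.1 hx'.1.1.1.1
    · intro hx; exact hx0U hx.1.1.1.1
    · intro hx; exact hx0M hx.1.1.1.1
    · intro g' hg' x hx hgx
      rcases Finset.mem_insert.mp hg' with heq | hg'S
      · subst heq
        rcases hx with hx | hx
        · have hgx1 : g' • x ∈ A1 := hx.1.2
          have hgx2 : g' • x ∈ A2 := hx.2
          rcases hgx with hgx | hgx
          · exact Set.disjoint_left.mp hd1 hgx1 hgx.1.1.1.2
          · exact Set.disjoint_left.mp hd2 hgx2 hgx.1.1.1.2
        · have hgx3 : g' • x ∈ A3 := hx.1.2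
          have hgx4 : g' • x ∈ A4 := hx.2
          rcases hgx with hgx | hgx
          · exact Set.disjoint_left.mp hd3 hgx3 hgx.1.1.2
          · exact Set.disjoint_left.mp hd4 hgx4 hgx.1.1.2
      · -- g' ∈ S : use induction hypothesis
        have hx' : x ∈ Up ∪ Um := by
          rcases hx with hx | hx
          · exact Or.inl hx.1.1.1.1
          · exact Or.inr hx.1.1.1.1
        have := hS g' hg'S x hx'
        apply this
        rcases hgx with hgx | hgx
        · exact Or.inl hgx.1.1.1.1
        · exact Or.inr hgx.1.1.1.1

/-- **Lemma 3.** Let `Γ` be a countable discrete group acting on a compact Hausdorff space `X`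
by a minimal, extremely proximal and topologically free action (a topologically-free extreme
boundary), and let `(zₙ)` be an axial sequence with associated distinct points `z₊, z₋ ∈ X`.
Then for every finite `F₀ ⊆ Γ` and every `N ≥ 1` there is an index `n` such that no nontrivial
power `zₙᵏ` (`1 ≤ |k| ≤ N`) is the identity and no `N`-alternating word built from `F₀ \ {1}`
and powers of `zₙ` is the identity.  Equivalently, `u = zₙ` satisfies the approximate
selflessness conditions for `F₀` and `N` in `C*_λ(Γ)` with exact value zero. -/
theorem axial_sequence_gives_approx_selfless_witnesses
    {Γ : Type*} [Group Γ] [Countable Γ]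
    {X : Type*} [TopologicalSpace X] [CompactSpace X] [T2Space X]
    [MulAction Γ X] [ContinuousConstSMul Γ X]
    -- the action is minimal
    (hmin : ∀ x : X, Dense (MulAction.orbit Γ x))
    -- the action is extremely proximal
    (hprox : ∀ U V : Set X, IsOpen U → IsOpen V → U.Nonempty → V.Nonempty →
      ∃ g : Γ, (fun x => g • x) '' Uᶜ ⊆ V)
    -- the action is topologically free
    (hfree : Dense {x : X | ∀ g : Γ, g • x = x → g = 1})
    -- `(zₙ)` is an axial sequence with poles `z₊ ≠ z₋`
    (z : ℕ → Γ) (zp zm : X) (hne : zp ≠ zm)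
    (haxial : ∀ Up ∈ nhds zp, ∀ Um ∈ nhds zm,
      ∀ᶠ n in atTop, (fun x => z n • x) '' Umᶜ ⊆ Up)
    (hfreepoles : ∀ g : Γ, g ≠ 1 →
      g • zp ≠ zp ∧ g • zp ≠ zm ∧ g • zm ≠ zp ∧ g • zm ≠ zm) :
    ∀ F₀ : Finset Γ, ∀ N : ℕ, 1 ≤ N →
      ∃ n : ℕ,
        (∀ k : ℤ, 1 ≤ |k| → |k| ≤ (N : ℤ) → (z n) ^ k ≠ 1) ∧
        (∀ w : Γ, IsAltGroupWord (F₀ : Set Γ) N (z n) w → w ≠ 1) := by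
  classical
  intro F₀ N _
  -- a third point
  obtain ⟨x₀, hx0p, hx0m⟩ : ∃ x : X, x ≠ zp ∧ x ≠ zm := by
    by_contra hc
    push_neg at hc
    have hopen : IsOpen ({zp}ᶜ : Set X) := isOpen_compl_singleton
    have hne' : ({zp}ᶜ : Set X).Nonempty := ⟨zm, by simpa using hne.symm⟩
    obtain ⟨y, hy1, hy2⟩ := (hmin zp).exists_mem_open hopen hne'
    obtain ⟨g, hg⟩ := hy1
    have hg' : g • zp = y := hg
    have hyzp : y ≠ zp := by simpa using hy2
    have hyzm : y = zm := hc y hyzp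
    have hgne : g ≠ 1 := by
      intro h; rw [h, one_smul] at hg'; exact hyzp hg'.symm
    exact (hfreepoles g hgne).2.1 (by rw [hg', hyzm])
  -- separating neighbourhoods for F₀ \ {1}
  obtain ⟨Up, Um, hUpo, hUmo, hzpU, hzmU, hdisj, hx0U, hx0M, hS⟩ :=
    pingpong_nbhds zp zm x₀ hne hx0p hx0m hfreepoles (F₀.erase 1)
      (fun g hg => (Finset.mem_erase.mp hg).1)
  -- choose n via axiality
  obtain ⟨n, hn⟩ := (haxial Up (hUpo.mem_nhds hzpU) Um (hUmo.mem_nhds hzmU)).exists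
  set s : Γ := z n with hs
  have hmap : ∀ x : X, x ∉ Um → s • x ∈ Up := fun x hx => hn ⟨x, hx, rfl⟩
  have hmapinv : ∀ x : X, x ∉ Up → s⁻¹ • x ∈ Um := by
    intro x hx
    by_contra hcon
    exact hx (by simpa using hmap _ hcon)
  -- positive powers
  have hpowp : ∀ m : ℕ, ∀ x : X, x ∉ Um → s ^ (m + 1) • x ∈ Up := by
    intro m
    induction m with
    | zero => intro x hx; simpa using hmap x hx
    | succ m ih =>
      intro x hx
      have h1 := ih x hx
      have h2 : s ^ (m + 1 + 1) • x = s • (s ^ (m + 1) • x) := by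
        rw [← mul_smul, ← pow_succ']
      rw [h2]
      exact hmap _ (fun hmem => hdisj _ h1 hmem)
  have hpowm : ∀ m : ℕ, ∀ x : X, x ∉ Up → (s⁻¹) ^ (m + 1) • x ∈ Um := by
    intro m
    induction m with
    | zero => intro x hx; simpa using hmapinv x hx
    | succ m ih =>
      intro x hx
      have h1 := ih x hx
      have h2 : (s⁻¹) ^ (m + 1 + 1) • x = s⁻¹ • ((s⁻¹) ^ (m + 1) • x) := by
        rw [← mul_smul, ← pow_succ']
      rw [h2]
      exact hmapinv _ (fun hmem => hdisj _ hmem h1)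
  have hpos : ∀ k : ℤ, 0 < k → ∀ x : X, x ∉ Um → s ^ k • x ∈ Up := by
    intro k hk x hx
    obtain ⟨m, hm⟩ : ∃ m : ℕ, k = (m : ℤ) + 1 := ⟨(k - 1).toNat, by omega⟩
    have : s ^ k = s ^ (m + 1) := by
      rw [hm, ← zpow_natCast]; norm_cast
    rw [this]
    exact hpowp m x hx
  have hneg : ∀ k : ℤ, k < 0 → ∀ x : X, x ∉ Up → s ^ k • x ∈ Um := by
    intro k hk x hx
    obtain ⟨m, hm⟩ : ∃ m : ℕ, k = -((m : ℤ) + 1) := ⟨(-k - 1).toNat, by omega⟩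
    have : s ^ k = (s⁻¹) ^ (m + 1) := by
      rw [hm, zpow_neg, ← inv_zpow, ← zpow_natCast]; norm_cast
    rw [this]
    exact hpowm m x hx
  have hT : ∀ g ∈ ((F₀.erase 1 : Finset Γ) : Set Γ), ∀ x ∈ Up ∪ Um, g • x ∉ Up ∪ Um :=
    fun g hg => hS g hg
  refine ⟨n, ?_, ?_⟩
  · -- powers are nontrivial
    intro k hk1 _ hcon
    have hk0 : k ≠ 0 := by intro h; rw [h] at hk1; simp at hk1
    rcases lt_or_gt_of_ne hk0 with h | h
    · have := hneg k h x₀ hx0U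
      rw [hcon, one_smul] at this
      exact hx0M this
    · have := hpos k h x₀ hx0M
      rw [hcon, one_smul] at this
      exact hx0U this
  · -- alternating words are nontrivial
    rintro w ⟨l, hlne, hchain, _, hmem, hwprod⟩ hw1
    rcases l with _ | ⟨f, rest⟩
    · exact hlne rfl
    have hmem' : ∀ f' ∈ f :: rest, (∀ g : Γ, f' = Sum.inl g → g ∈ ((F₀.erase 1 : Finset Γ) : Set Γ)) ∧
        (∀ k : ℤ, f' = Sum.inr k → k ≠ 0) := by
      intro f' hf'
      obtain ⟨h1, h2⟩ := hmem f' hf'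
      refine ⟨fun g hg => ?_, fun k hk => ?_⟩
      · have := h1 g hg
        simp [Finset.mem_erase, this.1, this.2]
      · have := (h2 k hk).1
        intro h; rw [h] at this; simp at this
    have hcore := pingpong_core Up Um s _ hpos hneg hT rest f hchain hmem'
    have hwp : ∀ p : X, ((f :: rest).map (groupAltFactor s)).prod • p = p := by
      intro p; rw [← hwprod, hw1, one_smul]
    -- choose the test point according to the first and last factors
    have hlastmem := hmem' _ (myLast_mem rest f)
    have hheadmem := hmem' f (List.mem_cons_self)
    rcases hlast : myLast f rest with g | k
    · -- last factor is a group element: test point depends on head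
      rcases hhead : f with g₁ | k₁
      · -- head inl: w • zp ∉ Up ∪ Um but w • zp = zp ∈ Up
        have := hcore zp (by rw [hlast]; exact Or.inl hzpU)
        rw [hwp zp] at this
        rw [hhead] at this
        exact this (Or.inl hzpU)
      · have hk1 : k₁ ≠ 0 := by
          rw [hhead] at hheadmem; exact hheadmem.2 k₁ rfl
        rcases lt_or_gt_of_ne hk1 with h | h
        · -- head negative power: w • zp ∈ Um
          have := hcore zp (by rw [hlast]; exact Or.inl hzpU)
          rw [hwp zp] at this
          rw [hhead] at this
          exact hdisj zp hzpU (this.2 h)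
        · -- head positive power: w • zm ∈ Up
          have := hcore zm (by rw [hlast]; exact Or.inr hzmU)
          rw [hwp zm] at this
          rw [hhead] at this
          exact hdisj zm (this.1 h) hzmU
    · -- last factor is a power: test point x₀
      have hpre : altPre Up Um (myLast f rest) x₀ := by
        rw [hlast]
        exact ⟨fun _ => hx0M, fun _ => hx0U⟩
      have hgood := hcore x₀ hpre
      rw [hwp x₀] at hgood
      rcases hhead : f with g₁ | k₁
      · -- head is a group element, last is a power: test point by sign of the last power
        have hk0 : k ≠ 0 := by
          rw [hlast] at hlastmem; exact hlastmem.2 k rfl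
        rcases lt_or_gt_of_ne hk0 with h | h
        · have := hcore zm (by
            rw [hlast]
            exact ⟨fun hh => absurd hh (by omega), fun _ hp => hdisj zm hp hzmU⟩)
          rw [hwp zm] at this
          rw [hhead] at this
          exact this (Or.inr hzmU)
        · have := hcore zp (by
            rw [hlast]
            exact ⟨fun _ => hdisj zp hzpU, fun hh => absurd hh (by omega)⟩)
          rw [hwp zp] at this
          rw [hhead] at this
          exact this (Or.inl hzpU)
      · have hk1 : k₁ ≠ 0 := by
          rw [hhead] at hheadmem; exact hheadmem.2 k₁ rfl
        rw [hhead] at hgood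
        rcases lt_or_gt_of_ne hk1 with h | h
        · exact hx0M (hgood.2 h)
        · exact hx0U (hgood.1 h)
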